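/- arXiv:1501.00521 — 3 statements merged into one kernel-verified Lean document; each statement's English description precedes it below -/
import Mathlib

section
/- (Restricted Dirichlet form comparison, key step of the one-block estimate) Fix K ≥ 0 and let Λ be the subgraph of X with V_Λ := B(o,K) and E_Λ := {e ∈ E : oe, te ∈ V_Λ}. For every m such that Γ_m ∩ B_Γ(2K+2) = {id} (so that Λ embeds into X_m via the covering map) and every Γ/Γ_m-invariant probability measure μ on Z_m (identified with its Γ_m-periodic extension to Z), one has I°_Λ(μ) ≤ ( |B_Γ(K)| / (c₀ [Γ:Γ_m]) ) · I_m(μ), where B_Γ(K) := {σ ∈ Γ : |σ|_Γ ≤ K}. -/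
open Filter Pointwise

namespace Tower

variable {Γ : Type} [Group Γ] [DecidableEq Γ]

/-- The ball of radius `n` about the identity in the Cayley graph of `(Γ, S)`, as a `Finset`:
products of at most `n` elements of `S`. -/
def ballF (S : Finset Γ) : ℕ → Finset Γ
  | 0 => {1}
  | n + 1 => ballF S n ∪ ballF S n * S

lemma one_mem_ballF (S : Finset Γ) (n : ℕ) : (1 : Γ) ∈ ballF S n := by
  induction n with
  | zero => simp [ballF]
  | succ n ih => exact Finset.mem_union_left _ ih

/-- The word norm of `x` with respect to `S`. -/
noncomputable def wordNorm (S : Finset Γ) (x : Γ) : ℕ := sInf {n | x ∈ ballF S n}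

/-- `(F i)` is a Følner sequence for `(Γ, S)`. -/
def IsFolner (S : Finset Γ) (F : ℕ → Finset Γ) : Prop :=
  (∀ i, (F i).Nonempty) ∧
    Tendsto (fun i => (((F i * S) \ F i).card : ℝ) / (F i).card) atTop (nhds 0)

/-- `b(K)`: the largest `i` such that `F i` is contained in the ball of radius `K` about `o`. -/
noncomputable def bFol (S : Finset Γ) (F : ℕ → Finset Γ) (K : ℝ) : ℕ :=
  sSup {i | ∀ x ∈ F i, (wordNorm S x : ℝ) ≤ K}

/-- Exchange the values of a configuration at two coordinates. -/
def exch {α : Type} [DecidableEq α] (x y : α) (η : α → Bool) : α → Bool :=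
  fun z => if z = x then η y else if z = y then η x else η z

/-- Exchange of values at two coordinates, on configurations restricted to a `Finset`. -/
def exchOn {α : Type} [DecidableEq α] (A : Finset α) (x y : α)
    (ζ : {a // a ∈ A} → Bool) : {a // a ∈ A} → Bool :=
  fun z => if (z : α) = x then (if h : y ∈ A then ζ ⟨y, h⟩ else ζ z)
    else if (z : α) = y then (if h : x ∈ A then ζ ⟨x, h⟩ else ζ z) else ζ z

/-- The type of generators. -/
abbrev Gen (S : Finset Γ) : Type _ := {s : Γ // s ∈ S}

/-- A `Γ`-invariant local function bundle for vertices `f : V × Z → ℝ` on the Cayley graph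
`X = (V, E)` of `(Γ, S)`, `V = Γ`, `Z = {0,1}^V`. -/
structure LocalBundleV (S : Finset Γ) : Type _ where
  f : Γ → (Γ → Bool) → ℝ
  r : ℕ
  localized : ∀ (x : Γ) (η η' : Γ → Bool),
    (∀ z ∈ (ballF S r).image (x * ·), η z = η' z) → f x η = f x η'
  invariant : ∀ (σ x : Γ) (η : Γ → Bool), f (σ * x) (fun z => η (σ⁻¹ * z)) = f x η

/-- A jump rate: a symmetric, non-degenerate `Γ`-invariant local function bundle for edges,
an edge being encoded as a pair `(x, s) : Γ × Gen S` with origin `x` and terminus `x * s`. -/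
structure JumpRate (S : Finset Γ) : Type _ where
  c : Γ → Gen S → (Γ → Bool) → ℝ
  c₀ : ℝ
  c₀_pos : 0 < c₀
  nondeg : ∀ x s η, c₀ ≤ c x s η
  r : ℕ
  localized : ∀ (x : Γ) (s : Gen S) (η η' : Γ → Bool),
    (∀ z ∈ (ballF S r).image (x * ·) ∪ (ballF S r).image (x * (s : Γ) * ·), η z = η' z) →
      c x s η = c x s η'
  invariant : ∀ (σ x : Γ) (s : Gen S) (η : Γ → Bool),
    c (σ * x) s (fun z => η (σ⁻¹ * z)) = c x s η
  symm_rev : ∀ (x : Γ) (s : Gen S) (h : (s : Γ)⁻¹ ∈ S) (η : Γ → Bool),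
    c (x * (s : Γ)) ⟨(s : Γ)⁻¹, h⟩ η = c x s η
  symm_exch : ∀ (x : Γ) (s : Gen S) (η : Γ → Bool),
    c x s (exch x (x * (s : Γ)) η) = c x s η

/-- `ρ`-Bernoulli weight on `{0,1}`. -/
def bw (ρ : ℝ) (b : Bool) : ℝ := if b then ρ else 1 - ρ

/-- Expectation with respect to the `ρ`-Bernoulli product measure `ν_ρ` of a cylinder function
depending only on the coordinates in the finite set `A`. -/
noncomputable def expCyl (ρ : ℝ) (A : Finset Γ) (g : (Γ → Bool) → ℝ) : ℝ :=
  ∑ ζ : ({a // a ∈ A} → Bool),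
    (∏ a : {a // a ∈ A}, bw ρ (ζ a)) *
      g (fun z => if h : z ∈ A then ζ ⟨z, h⟩ else false)

/-- The global average `⟨f_o⟩(ρ) = E_{ν_ρ}[f_o]`. -/
noncomputable def globalAvg {S : Finset Γ} (f : LocalBundleV S) (ρ : ℝ) : ℝ :=
  expCyl ρ (ballF S f.r) (f.f 1)

section Quot

variable (N : Subgroup Γ)

/-- The configuration space `Z_m = {0,1}^{V_m}` over the quotient graph `X_m = Γ_m \ X`. -/
abbrev Conf (N : Subgroup Γ) : Type _ := (Γ ⧸ N) → Bool

/-- The `Γ_m`-periodic extension of a configuration on `X_m` to `X`. -/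
def liftZ (η : Conf N) : Γ → Bool := fun x => η (QuotientGroup.mk x)

/-- The function on `V_m × Z_m` induced by a local function bundle. -/
noncomputable def fQ {S : Finset Γ} (f : LocalBundleV S) (v : Γ ⧸ N) (η : Conf N) : ℝ :=
  f.f (Quotient.out v) (liftZ N η)

/-- The jump rate induced on the quotient graph, on the edge `(v, v * s)`. -/
noncomputable def cQ {S : Finset Γ} (c : JumpRate S) (v : Γ ⧸ N) (s : Gen S) (η : Conf N) : ℝ :=
  c.c (Quotient.out v) s (liftZ N η)

variable [N.Normal]

/-- `η^e` on the quotient, for the edge `e = (v, v * s)`. -/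
def exchQ [DecidableEq (Γ ⧸ N)] (v : Γ ⧸ N) (s : Γ) (η : Conf N) : Conf N :=
  exch v (v * QuotientGroup.mk s) η

/-- The graph distance on the quotient graph `X_m`. -/
noncomputable def distQ (S : Finset Γ) (v w : Γ ⧸ N) : ℕ :=
  sInf {n | ∃ x ∈ ballF S n, v * QuotientGroup.mk x = w}

/-- The diameter of the quotient graph `X_m`. -/
noncomputable def diamQ (S : Finset Γ) : ℕ :=
  sSup {k | ∃ v w : Γ ⧸ N, distQ N S v w = k}

variable [Fintype (Γ ⧸ N)] [DecidableEq (Γ ⧸ N)]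

/-- `μ` is a probability measure on the finite configuration space `Z_m`. -/
def IsProb (μ : Conf N → ℝ) : Prop := (∀ η, 0 ≤ μ η) ∧ ∑ η, μ η = 1

/-- The action of `Γ/Γ_m` on `Z_m`. -/
def actQ (σ : Γ ⧸ N) (η : Conf N) : Conf N := fun z => η (σ⁻¹ * z)

/-- `μ` is `Γ/Γ_m`-invariant. -/
def IsInvariant (μ : Conf N → ℝ) : Prop := ∀ σ η, μ (actQ N σ η) = μ η

/-- The uniform ((1/2)-Bernoulli) measure `ν_m` on `Z_m`. -/
noncomputable def nuU : Conf N → ℝ := fun _ => (Fintype.card (Conf N) : ℝ)⁻¹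

/-- The density `φ = dμ/dν_m`. -/
noncomputable def dens (μ : Conf N → ℝ) : Conf N → ℝ :=
  fun η => (Fintype.card (Conf N) : ℝ) * μ η

/-- `√φ` where `φ = dμ/dν_m`. -/
noncomputable def sqrtDens (μ : Conf N → ℝ) : Conf N → ℝ :=
  fun η => Real.sqrt (dens N μ η)

/-- Expectation with respect to a probability measure on `Z_m`. -/
noncomputable def Emeas (μ : Conf N → ℝ) (g : Conf N → ℝ) : ℝ := ∑ η, μ η * g η

/-- The generator `L_m F (η) = Σ_{e ∈ E_m} c(e,η) (F(η^e) - F(η))`. -/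
noncomputable def Lgen {S : Finset Γ} (c : JumpRate S) (F : Conf N → ℝ) (η : Conf N) : ℝ :=
  ∑ e : (Γ ⧸ N) × Gen S, cQ N c e.1 e.2 η * (F (exchQ N e.1 (e.2 : Γ) η) - F η)

/-- The Dirichlet form `I_m(μ) = -∫ √φ L_m √φ dν_m`. -/
noncomputable def ImGen {S : Finset Γ} (c : JumpRate S) (μ : Conf N → ℝ) : ℝ :=
  - ∑ η, nuU N η * (sqrtDens N μ η * Lgen N c (sqrtDens N μ) η)

/-- The Dirichlet form in sum form:
`I_m(μ) = (1/2) Σ_{e ∈ E_m} ∫ c(e,η) (π_e √φ)² dν_m`. -/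
noncomputable def ImSum {S : Finset Γ} (c : JumpRate S) (μ : Conf N → ℝ) : ℝ :=
  (1 / 2) * ∑ e : (Γ ⧸ N) × Gen S, ∑ η, nuU N η *
    (cQ N c e.1 e.2 η * (sqrtDens N μ (exchQ N e.1 (e.2 : Γ) η) - sqrtDens N μ η) ^ 2)

/-- The local average `f̄_{v,i}` on the quotient, over the Følner set `Fi`. -/
noncomputable def fbarQ {S : Finset Γ} (f : LocalBundleV S) (Fi : Finset Γ) (v : Γ ⧸ N)
    (η : Conf N) : ℝ :=
  ((Fi.card : ℝ))⁻¹ * ∑ σ ∈ Fi, fQ N f (QuotientGroup.mk σ * v) η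

/-- The local particle density `η̄_{v,i}` on the quotient, over the Følner set `Fi`. -/
noncomputable def etabarQ (Fi : Finset Γ) (v : Γ ⧸ N) (η : Conf N) : ℝ :=
  ((Fi.card : ℝ))⁻¹ * ∑ σ ∈ Fi, (if η (QuotientGroup.mk σ * v) then (1 : ℝ) else 0)

/-- The image of `E⁰ = {e ∈ E : oe = o or te = o}` in `E_m`. -/
def E0Q (S : Finset Γ) : Finset ((Γ ⧸ N) × Gen S) :=
  Finset.univ.filter fun e => e.1 = 1 ∨ e.1 * QuotientGroup.mk (e.2 : Γ) = 1

/-- The marginal `μ|_Λ` on `Z_Λ = {0,1}^A` of a measure on `Z_m` (identified with its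
`Γ_m`-periodic extension). -/
noncomputable def marg (A : Finset Γ) (μ : Conf N → ℝ) (ζ : {a // a ∈ A} → Bool) : ℝ :=
  ∑ η : Conf N, if (∀ a : {a // a ∈ A}, liftZ N η (a : Γ) = ζ a) then μ η else 0

/-- The density `φ_Λ = d(μ|_Λ)/dν_Λ`. -/
noncomputable def margDens (A : Finset Γ) (μ : Conf N → ℝ) (ζ : {a // a ∈ A} → Bool) : ℝ :=
  (Fintype.card ({a // a ∈ A} → Bool) : ℝ) * marg N A μ ζ

/-- The restricted Dirichlet form
`I°_Λ(μ) = (1/2) Σ_{e ∈ E_Λ} ∫_{Z_Λ} (π_e √φ_Λ)² dν_Λ` for the subgraph `Λ = (A, Eset)`. -/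
noncomputable def IrestV {S : Finset Γ} (A : Finset Γ) (Eset : Finset (Γ × Gen S))
    (μ : Conf N → ℝ) : ℝ :=
  (1 / 2) * ∑ e ∈ Eset, ∑ ζ : ({a // a ∈ A} → Bool),
    (Fintype.card ({a // a ∈ A} → Bool) : ℝ)⁻¹ *
      (Real.sqrt (margDens N A μ (exchOn A e.1 (e.1 * (e.2 : Γ)) ζ)) -
        Real.sqrt (margDens N A μ ζ)) ^ 2

/-- The marginal on `Z_Λ × Z_Λ` of the pushforward `σ̂μ` of `μ` under `η ↦ (η, σ⁻¹η)`. -/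
noncomputable def margTwo (σ : Γ) (A : Finset Γ) (μ : Conf N → ℝ)
    (ζ ζ' : {a // a ∈ A} → Bool) : ℝ :=
  ∑ η : Conf N,
    if ((∀ a : {a // a ∈ A}, liftZ N η (a : Γ) = ζ a) ∧
        (∀ a : {a // a ∈ A}, liftZ N η (σ * (a : Γ)) = ζ' a)) then μ η else 0

/-- The density of `(σ̂μ)|_{Λ×Λ}` with respect to `ν_Λ ⊗ ν_Λ`. -/
noncomputable def margTwoDens (σ : Γ) (A : Finset Γ) (μ : Conf N → ℝ)
    (ζ ζ' : {a // a ∈ A} → Bool) : ℝ :=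
  ((Fintype.card ({a // a ∈ A} → Bool) : ℝ)) ^ 2 * margTwo N σ A μ ζ ζ'

/-- `I^{(o,o)}_{Λ×Λ}(σ̂μ) = (1/2) ∫ (π̃_{o,o} √(d(σ̂μ)|_{Λ×Λ}/d(ν_Λ⊗ν_Λ)))² d(ν_Λ⊗ν_Λ)`. -/
noncomputable def Ioo (σ : Γ) (A : Finset Γ) (h1 : (1 : Γ) ∈ A) (μ : Conf N → ℝ) : ℝ :=
  (1 / 2) * ∑ ζ : ({a // a ∈ A} → Bool), ∑ ζ' : ({a // a ∈ A} → Bool),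
    (((Fintype.card ({a // a ∈ A} → Bool) : ℝ)) ^ 2)⁻¹ *
      (Real.sqrt (margTwoDens N σ A μ (Function.update ζ ⟨1, h1⟩ (ζ' ⟨1, h1⟩))
          (Function.update ζ' ⟨1, h1⟩ (ζ ⟨1, h1⟩))) -
        Real.sqrt (margTwoDens N σ A μ ζ ζ')) ^ 2

/-- The two-block restricted Dirichlet form `I°_{Λ×Λ}(σ̂μ)`, i.e. the Dirichlet form of
`L°_Λ ⊗ 1 + 1 ⊗ L°_Λ` of the square root of the density of `(σ̂μ)|_{Λ×Λ}`. -/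
noncomputable def ItwoRest {S : Finset Γ} (σ : Γ) (A : Finset Γ) (Eset : Finset (Γ × Gen S))
    (μ : Conf N → ℝ) : ℝ :=
  (1 / 2) * ∑ e ∈ Eset, ∑ ζ : ({a // a ∈ A} → Bool), ∑ ζ' : ({a // a ∈ A} → Bool),
    (((Fintype.card ({a // a ∈ A} → Bool) : ℝ)) ^ 2)⁻¹ *
      ((Real.sqrt (margTwoDens N σ A μ (exchOn A e.1 (e.1 * (e.2 : Γ)) ζ) ζ') -
          Real.sqrt (margTwoDens N σ A μ ζ ζ')) ^ 2 +
        (Real.sqrt (margTwoDens N σ A μ ζ (exchOn A e.1 (e.1 * (e.2 : Γ)) ζ')) -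
          Real.sqrt (margTwoDens N σ A μ ζ ζ')) ^ 2)

end Quot

/-- The edge set `E_Λ` of the subgraph `Λ` spanned by the ball of radius `K`. -/
def ELam (S : Finset Γ) (K : ℕ) : Finset (Γ × Gen S) :=
  (ballF S K ×ˢ (Finset.univ : Finset (Gen S))).filter fun e => e.1 * (e.2 : Γ) ∈ ballF S K


/-! ### Auxiliary lemmas for the restricted Dirichlet form comparison -/

section AuxBall

lemma ballF_succ (S : Finset Γ) (n : ℕ) : ballF S (n+1) = ballF S n ∪ ballF S n * S := rfl

lemma ballF_mono_succ (S : Finset Γ) (n : ℕ) : ballF S n ⊆ ballF S (n+1) := by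
  rw [ballF_succ]; exact Finset.subset_union_left

lemma ballF_mono (S : Finset Γ) {n m : ℕ} (h : n ≤ m) : ballF S n ⊆ ballF S m := by
  induction h with
  | refl => exact subset_rfl
  | step h ih => exact (ih).trans (ballF_mono_succ S _)

lemma mul_mem_ballF (S : Finset Γ) {a b : Γ} {n m : ℕ} (ha : a ∈ ballF S n)
    (hb : b ∈ ballF S m) : a * b ∈ ballF S (n + m) := by
  induction m generalizing b with
  | zero =>
    simp only [ballF, Finset.mem_singleton] at hb
    subst hb; simpa using ha
  | succ m ih =>
    rw [ballF_succ, Finset.mem_union] at hb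
    rcases hb with hb | hb
    · exact ballF_mono S (by omega) (ih hb)
    · obtain ⟨b', hb', t, ht, rfl⟩ := Finset.mem_mul.mp hb
      rw [← mul_assoc]
      show a * b' * t ∈ ballF S (n + m + 1)
      rw [ballF_succ]
      exact Finset.mem_union_right _ (Finset.mul_mem_mul (ih hb') ht)

lemma smul_mem_ballF (S : Finset Γ) {s b : Γ} (hs : s ∈ S) {n : ℕ} (hb : b ∈ ballF S n) :
    s * b ∈ ballF S (n + 1) := by
  induction n generalizing b with
  | zero =>
    simp only [ballF, Finset.mem_singleton] at hb
    subst hb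
    rw [mul_one, ballF_succ]
    exact Finset.mem_union_right _
      (Finset.mem_mul.mpr ⟨1, Finset.mem_singleton_self 1, s, hs, one_mul s⟩)
  | succ n ih =>
    rw [ballF_succ, Finset.mem_union] at hb
    rcases hb with hb | hb
    · exact ballF_mono S (by omega) (ih hb)
    · obtain ⟨b', hb', t, ht, rfl⟩ := Finset.mem_mul.mp hb
      rw [← mul_assoc, ballF_succ]
      exact Finset.mem_union_right _ (Finset.mul_mem_mul (ih hb') ht)

lemma inv_mem_ballF (S : Finset Γ) (hS : ∀ s ∈ S, s⁻¹ ∈ S) {a : Γ} {n : ℕ}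
    (ha : a ∈ ballF S n) : a⁻¹ ∈ ballF S n := by
  induction n generalizing a with
  | zero => simp only [ballF, Finset.mem_singleton] at ha ⊢; simp [ha]
  | succ n ih =>
    rw [ballF_succ, Finset.mem_union] at ha
    rcases ha with ha | ha
    · exact ballF_mono S (by omega) (ih ha)
    · obtain ⟨b, hb, t, ht, rfl⟩ := Finset.mem_mul.mp ha
      rw [mul_inv_rev]
      exact smul_mem_ballF S (hS t ht) (ih hb)

lemma exch_exch {α : Type} [DecidableEq α] (x y : α) (η : α → Bool) :
    exch x y (exch x y η) = η := by
  funext z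
  simp only [exch]
  split_ifs <;> simp_all

lemma exch_bijective {α : Type} [DecidableEq α] (x y : α) :
    Function.Bijective (exch x y (α := α)) :=
  Function.bijective_iff_has_inverse.mpr ⟨exch x y, exch_exch x y, exch_exch x y⟩

lemma exchOn_exchOn {α : Type} [DecidableEq α] (A : Finset α) (x y : α)
    (ζ : {a // a ∈ A} → Bool) : exchOn A x y (exchOn A x y ζ) = ζ := by
  funext z
  have hz := z.2
  simp only [exchOn]
  split_ifs <;>
    first
      | rfl
      | (apply congrArg; exact Subtype.ext (by simp_all))

lemma sqrt_scale_sub_sq (r a b : ℝ) (hr : 0 ≤ r) :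
    (Real.sqrt (r * a) - Real.sqrt (r * b)) ^ 2
      = r * (Real.sqrt a - Real.sqrt b) ^ 2 := by
  rw [Real.sqrt_mul hr, Real.sqrt_mul hr]
  have h : (Real.sqrt r * Real.sqrt a - Real.sqrt r * Real.sqrt b) ^ 2
      = Real.sqrt r ^ 2 * (Real.sqrt a - Real.sqrt b) ^ 2 := by ring
  rw [h, Real.sq_sqrt hr]

lemma sqrt_sum_sub_sq_le {ι : Type*} [Fintype ι] (a b : ι → ℝ)
    (ha : ∀ i, 0 ≤ a i) (hb : ∀ i, 0 ≤ b i) :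
    (Real.sqrt (∑ i, a i) - Real.sqrt (∑ i, b i)) ^ 2
      ≤ ∑ i, (Real.sqrt (a i) - Real.sqrt (b i)) ^ 2 := by
  have hA : (0:ℝ) ≤ ∑ i, a i := Finset.sum_nonneg fun i _ => ha i
  have hB : (0:ℝ) ≤ ∑ i, b i := Finset.sum_nonneg fun i _ => hb i
  have hCS := Real.sum_sqrt_mul_sqrt_le (f := a) (g := b) Finset.univ
    (fun i => ha i) (fun i => hb i)
  have e1 : ∀ i : ι, (Real.sqrt (a i) - Real.sqrt (b i)) ^ 2
      = a i + b i - 2 * (Real.sqrt (a i) * Real.sqrt (b i)) := by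
    intro i
    have h1 := Real.sq_sqrt (ha i)
    have h2 := Real.sq_sqrt (hb i)
    nlinarith
  calc (Real.sqrt (∑ i, a i) - Real.sqrt (∑ i, b i)) ^ 2
      = (∑ i, a i) + (∑ i, b i)
        - 2 * (Real.sqrt (∑ i, a i) * Real.sqrt (∑ i, b i)) := by
        have h1 := Real.sq_sqrt hA
        have h2 := Real.sq_sqrt hB
        nlinarith
    _ ≤ (∑ i, a i) + (∑ i, b i) - 2 * ∑ i, Real.sqrt (a i) * Real.sqrt (b i) := by
        linarith
    _ = ∑ i, (Real.sqrt (a i) - Real.sqrt (b i)) ^ 2 := by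
        rw [Finset.sum_congr rfl (fun i _ => e1 i), Finset.sum_sub_distrib,
          Finset.sum_add_distrib, ← Finset.mul_sum]

end AuxBall

section AuxQuot

variable (N : Subgroup Γ) [N.Normal] [Fintype (Γ ⧸ N)] [DecidableEq (Γ ⧸ N)]

lemma exchQ_exchQ (v : Γ ⧸ N) (s : Γ) (η : Conf N) :
    exchQ N v s (exchQ N v s η) = η := exch_exch _ _ _

lemma exchQ_bijective (v : Γ ⧸ N) (s : Γ) : Function.Bijective (exchQ N v s) :=
  Function.bijective_iff_has_inverse.mpr
    ⟨exchQ N v s, exchQ_exchQ N v s, exchQ_exchQ N v s⟩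

lemma actQ_bijective (σ : Γ ⧸ N) : Function.Bijective (actQ N σ) := by
  refine Function.bijective_iff_has_inverse.mpr ⟨actQ N σ⁻¹, fun η => ?_, fun η => ?_⟩ <;>
    · funext z; simp [actQ, ← mul_assoc]

lemma exchQ_actQ (v : Γ ⧸ N) (s : Γ) (η : Conf N) :
    exchQ N v s (actQ N v η) = actQ N v (exchQ N 1 s η) := by
  funext z
  have e1 : (v⁻¹ * z = 1) = (z = v) := by
    rw [inv_mul_eq_one]; exact propext eq_comm
  have e2 : (v⁻¹ * z = (QuotientGroup.mk s : Γ ⧸ N)) = (z = v * QuotientGroup.mk s) := by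
    rw [inv_mul_eq_iff_eq_mul]
  simp only [exchQ, actQ, exch, one_mul, inv_mul_cancel_left, inv_mul_cancel, e1, e2]

lemma sum_exchQ_invariant (μ : Conf N → ℝ) (hinv : IsInvariant N μ) (v : Γ ⧸ N) (s : Γ) :
    ∑ η : Conf N, (Real.sqrt (μ (exchQ N v s η)) - Real.sqrt (μ η)) ^ 2
      = ∑ η : Conf N, (Real.sqrt (μ (exchQ N 1 s η)) - Real.sqrt (μ η)) ^ 2 :=
  (Fintype.sum_bijective (actQ N v) (actQ_bijective N v) _ _
    (fun ξ => by rw [exchQ_actQ, hinv, hinv])).symm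

lemma liftZ_exch (A : Finset Γ) {x y : Γ} (hx : x ∈ A) (hy : y ∈ A)
    (hq : ∀ a ∈ A, ∀ b ∈ A, (QuotientGroup.mk a : Γ ⧸ N) = QuotientGroup.mk b → a = b)
    (η : Conf N) :
    (fun a : {a // a ∈ A} =>
        liftZ N (exch (QuotientGroup.mk x) (QuotientGroup.mk y) η) (a : Γ))
      = exchOn A x y (fun a : {a // a ∈ A} => liftZ N η (a : Γ)) := by
  funext a
  have e1 : ((QuotientGroup.mk (a:Γ) : Γ ⧸ N) = QuotientGroup.mk x) = ((a:Γ) = x) :=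
    propext ⟨fun h => hq _ a.2 _ hx h, fun h => by rw [h]⟩
  have e2 : ((QuotientGroup.mk (a:Γ) : Γ ⧸ N) = QuotientGroup.mk y) = ((a:Γ) = y) :=
    propext ⟨fun h => hq _ a.2 _ hy h, fun h => by rw [h]⟩
  simp only [liftZ, exch, exchOn, dif_pos hx, dif_pos hy, e1, e2]

lemma exchQ_eq_exch (x ss : Γ) (η : Conf N) :
    exchQ N (QuotientGroup.mk x) ss η
      = exch (QuotientGroup.mk x) (QuotientGroup.mk (x * ss)) η := by
  simp only [exchQ, QuotientGroup.mk_mul]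

lemma cond_exch_iff (A : Finset Γ) {x : Γ} (ss : Γ) (hx : x ∈ A) (hy : x * ss ∈ A)
    (hq : ∀ a ∈ A, ∀ b ∈ A, (QuotientGroup.mk a : Γ ⧸ N) = QuotientGroup.mk b → a = b)
    (η : Conf N) (ζ : {a // a ∈ A} → Bool) :
    (∀ a : {a // a ∈ A},
        liftZ N (exchQ N (QuotientGroup.mk x) ss η) (a : Γ) = exchOn A x (x * ss) ζ a)
      ↔ (∀ a : {a // a ∈ A}, liftZ N η (a : Γ) = ζ a) := by
  have hL : (fun a : {a // a ∈ A} =>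
        liftZ N (exchQ N (QuotientGroup.mk x) ss η) (a : Γ))
      = exchOn A x (x * ss) (fun a : {a // a ∈ A} => liftZ N η (a : Γ)) := by
    rw [funext fun η' => exchQ_eq_exch N x ss η']
    exact liftZ_exch N A hx hy hq η
  rw [← funext_iff, ← funext_iff, hL]
  constructor
  · intro h
    have := congrArg (exchOn A x (x * ss)) h
    rwa [exchOn_exchOn, exchOn_exchOn] at this
  · intro h
    rw [h]

lemma marg_exchOn (A : Finset Γ) (μ : Conf N → ℝ) {x : Γ} (ss : Γ) (hx : x ∈ A)
    (hy : x * ss ∈ A)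
    (hq : ∀ a ∈ A, ∀ b ∈ A, (QuotientGroup.mk a : Γ ⧸ N) = QuotientGroup.mk b → a = b)
    (ζ : {a // a ∈ A} → Bool) :
    marg N A μ (exchOn A x (x * ss) ζ)
      = ∑ η : Conf N, if (∀ a : {a // a ∈ A}, liftZ N η (a : Γ) = ζ a)
          then μ (exchQ N (QuotientGroup.mk x) ss η) else 0 := by
  rw [marg]
  exact (Fintype.sum_bijective (exchQ N (QuotientGroup.mk x) ss)
    (exchQ_bijective N _ _) _ _ (fun η => by
      rw [if_congr (cond_exch_iff N A ss hx hy hq η ζ).symm rfl rfl])).symm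

lemma edge_marg_le (A : Finset Γ) (μ : Conf N → ℝ) (hμ0 : ∀ η, 0 ≤ μ η) {x : Γ} (ss : Γ)
    (hx : x ∈ A) (hy : x * ss ∈ A)
    (hq : ∀ a ∈ A, ∀ b ∈ A, (QuotientGroup.mk a : Γ ⧸ N) = QuotientGroup.mk b → a = b) :
    ∑ ζ : ({a // a ∈ A} → Bool),
        (Real.sqrt (marg N A μ (exchOn A x (x * ss) ζ)) - Real.sqrt (marg N A μ ζ)) ^ 2
      ≤ ∑ η : Conf N,
        (Real.sqrt (μ (exchQ N (QuotientGroup.mk x) ss η)) - Real.sqrt (μ η)) ^ 2 := by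
  have step1 : ∀ ζ : ({a // a ∈ A} → Bool),
      (Real.sqrt (marg N A μ (exchOn A x (x * ss) ζ)) - Real.sqrt (marg N A μ ζ)) ^ 2
        ≤ ∑ η : Conf N, if (∀ a : {a // a ∈ A}, liftZ N η (a : Γ) = ζ a)
            then (Real.sqrt (μ (exchQ N (QuotientGroup.mk x) ss η))
              - Real.sqrt (μ η)) ^ 2 else 0 := by
    intro ζ
    rw [marg_exchOn N A μ ss hx hy hq ζ, marg]
    refine (sqrt_sum_sub_sq_le _ _
      (fun η => by split; exacts [hμ0 _, le_rfl])
      (fun η => by split; exacts [hμ0 _, le_rfl])).trans_eq ?_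
    refine Finset.sum_congr rfl fun η _ => ?_
    split_ifs with h
    · rfl
    · simp
  calc ∑ ζ : ({a // a ∈ A} → Bool),
        (Real.sqrt (marg N A μ (exchOn A x (x * ss) ζ)) - Real.sqrt (marg N A μ ζ)) ^ 2
      ≤ ∑ ζ : ({a // a ∈ A} → Bool), ∑ η : Conf N,
          if (∀ a : {a // a ∈ A}, liftZ N η (a : Γ) = ζ a)
            then (Real.sqrt (μ (exchQ N (QuotientGroup.mk x) ss η))
              - Real.sqrt (μ η)) ^ 2 else 0 :=
        Finset.sum_le_sum fun ζ _ => step1 ζ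
    _ = ∑ η : Conf N, ∑ ζ : ({a // a ∈ A} → Bool),
          if (∀ a : {a // a ∈ A}, liftZ N η (a : Γ) = ζ a)
            then (Real.sqrt (μ (exchQ N (QuotientGroup.mk x) ss η))
              - Real.sqrt (μ η)) ^ 2 else 0 := Finset.sum_comm
    _ = ∑ η : Conf N,
        (Real.sqrt (μ (exchQ N (QuotientGroup.mk x) ss η)) - Real.sqrt (μ η)) ^ 2 := by
        refine Finset.sum_congr rfl fun η _ => ?_
        rw [Finset.sum_congr rfl (fun ζ _ => if_congr
          (funext_iff (f := fun a : {a // a ∈ A} => liftZ N η (a : Γ)) (g := ζ)).symm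
          rfl rfl)]
        rw [Finset.sum_ite_eq Finset.univ (fun a : {a // a ∈ A} => liftZ N η (a : Γ))
          (fun _ => (Real.sqrt (μ (exchQ N (QuotientGroup.mk x) ss η))
            - Real.sqrt (μ η)) ^ 2)]
        exact if_pos (Finset.mem_univ _)

end AuxQuot


/-- **Restricted Dirichlet form comparison** (key step of the one-block estimate):
for `Λ` the subgraph spanned by `B(o,K)`, if the covering is injective on a large enough
ball and `μ` is a `Γ/Γ_m`-invariant probability measure on `Z_m`, then
`I°_Λ(μ) ≤ (|B_Γ(K)| / (c₀ [Γ:Γ_m])) I_m(μ)`. -/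
theorem restricted_dirichlet_comparison {Γ : Type} [Group Γ] [DecidableEq Γ] [Infinite Γ]
    (S : Finset Γ) (hS_symm : ∀ s ∈ S, s⁻¹ ∈ S)
    (hS_gen : Subgroup.closure (S : Set Γ) = ⊤)
    (N : Subgroup Γ) [N.Normal] [N.FiniteIndex]
    [Fintype (Γ ⧸ N)] [DecidableEq (Γ ⧸ N)]
    (c : JumpRate S) (K : ℕ)
    (hinj : ∀ x ∈ N, x ∈ ballF S (2 * K + 2) → x = 1)
    (μ : Conf N → ℝ) (hμ : IsProb N μ) (hinv : IsInvariant N μ) :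
    IrestV N (ballF S K) (ELam S K) μ ≤
      ((ballF S K).card : ℝ) / (c.c₀ * (N.index : ℝ)) * ImSum N c μ := by
  classical
  -- injectivity of the covering map on the ball of radius K
  have hq : ∀ a ∈ ballF S K, ∀ b ∈ ballF S K,
      (QuotientGroup.mk a : Γ ⧸ N) = QuotientGroup.mk b → a = b := by
    intro a ha b hb hab
    have hmem : a⁻¹ * b ∈ N := QuotientGroup.eq.mp hab
    have hball : a⁻¹ * b ∈ ballF S (2 * K + 2) :=
      ballF_mono S (by omega) (mul_mem_ballF S (inv_mem_ballF S hS_symm ha) hb)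
    exact inv_mul_eq_one.mp (hinj _ hmem hball)
  have hcardΛ : (0:ℝ) < (Fintype.card ({a // a ∈ ballF S K} → Bool) : ℝ) :=
    Nat.cast_pos.mpr Fintype.card_pos
  have hcardm : (0:ℝ) < (Fintype.card (Conf N) : ℝ) := Nat.cast_pos.mpr Fintype.card_pos
  set D : Gen S → ℝ := fun s => ∑ η : Conf N,
    (Real.sqrt (μ (exchQ N 1 (s : Γ) η)) - Real.sqrt (μ η)) ^ 2 with hD
  have hD0 : ∀ s : Gen S, 0 ≤ D s := fun s => Finset.sum_nonneg fun η _ => sq_nonneg _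
  have hEmem : ∀ e ∈ ELam S K, e.1 ∈ ballF S K ∧ e.1 * (e.2 : Γ) ∈ ballF S K := by
    intro e he
    rw [ELam, Finset.mem_filter, Finset.mem_product] at he
    exact ⟨he.1.1, he.2⟩
  -- Step A: bound the restricted Dirichlet form by the edge sums of D
  have stepA : IrestV N (ballF S K) (ELam S K) μ ≤ (1/2) * ∑ e ∈ ELam S K, D e.2 := by
    rw [IrestV]
    refine mul_le_mul_of_nonneg_left (Finset.sum_le_sum fun e he => ?_) (by norm_num)
    obtain ⟨hx, hy⟩ := hEmem e he
    have hrw : ∀ ζ : ({a // a ∈ ballF S K} → Bool),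
        (Fintype.card ({a // a ∈ ballF S K} → Bool) : ℝ)⁻¹ *
          (Real.sqrt (margDens N (ballF S K) μ (exchOn (ballF S K) e.1 (e.1 * (e.2:Γ)) ζ)) -
            Real.sqrt (margDens N (ballF S K) μ ζ)) ^ 2
          = (Real.sqrt (marg N (ballF S K) μ (exchOn (ballF S K) e.1 (e.1 * (e.2:Γ)) ζ)) -
            Real.sqrt (marg N (ballF S K) μ ζ)) ^ 2 := by
      intro ζ
      rw [margDens, margDens, sqrt_scale_sub_sq _ _ _ hcardΛ.le,
        inv_mul_cancel_left₀ hcardΛ.ne']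
    rw [Finset.sum_congr rfl fun ζ _ => hrw ζ]
    exact (edge_marg_le N (ballF S K) μ hμ.1 (e.2 : Γ) hx hy hq).trans_eq
      (sum_exchQ_invariant N μ hinv _ _)
  -- Step B: crude bound of the edge sum
  have stepB : ∑ e ∈ ELam S K, D e.2
      ≤ ((ballF S K).card : ℝ) * ∑ s : Gen S, D s := by
    calc ∑ e ∈ ELam S K, D e.2
        ≤ ∑ e ∈ ballF S K ×ˢ (Finset.univ : Finset (Gen S)), D e.2 :=
          Finset.sum_le_sum_of_subset_of_nonneg (Finset.filter_subset _ _)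
            (fun e _ _ => hD0 e.2)
      _ = ∑ _x ∈ ballF S K, ∑ s : Gen S, D s := by rw [Finset.sum_product]
      _ = ((ballF S K).card : ℝ) * ∑ s : Gen S, D s := by
          rw [Finset.sum_const, nsmul_eq_mul]
  -- Step C: lower bound of the full Dirichlet form
  have stepC : (1/2) * (c.c₀ * ((Fintype.card (Γ ⧸ N) : ℝ) * ∑ s : Gen S, D s))
      ≤ ImSum N c μ := by
    rw [ImSum]
    have h2 : ∀ e : (Γ ⧸ N) × Gen S,
        c.c₀ * D e.2 ≤ ∑ η : Conf N, nuU N η *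
          (cQ N c e.1 e.2 η *
            (sqrtDens N μ (exchQ N e.1 (e.2 : Γ) η) - sqrtDens N μ η) ^ 2) := by
      intro e
      rw [hD]
      dsimp only
      rw [← sum_exchQ_invariant N μ hinv e.1 (e.2 : Γ), Finset.mul_sum]
      refine Finset.sum_le_sum fun η _ => ?_
      have hterm : nuU N η * (cQ N c e.1 e.2 η *
            (sqrtDens N μ (exchQ N e.1 (e.2 : Γ) η) - sqrtDens N μ η) ^ 2)
          = cQ N c e.1 e.2 η *
            (Real.sqrt (μ (exchQ N e.1 (e.2 : Γ) η)) - Real.sqrt (μ η)) ^ 2 := by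
        rw [nuU, sqrtDens, sqrtDens, dens, dens, sqrt_scale_sub_sq _ _ _ hcardm.le]
        field_simp
      rw [hterm]
      exact mul_le_mul_of_nonneg_right (by rw [cQ]; exact c.nondeg _ _ _) (sq_nonneg _)
    have h3 : ∑ e : (Γ ⧸ N) × Gen S, c.c₀ * D e.2
        = (Fintype.card (Γ ⧸ N) : ℝ) * (c.c₀ * ∑ s : Gen S, D s) := by
      rw [Fintype.sum_prod_type]
      have hc : ∀ x : Γ ⧸ N, ∑ y : Gen S, c.c₀ * D (x, y).2 = c.c₀ * ∑ s : Gen S, D s :=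
        fun x => by rw [← Finset.mul_sum]
      rw [Finset.sum_congr rfl fun x _ => hc x, Finset.sum_const, Finset.card_univ,
        nsmul_eq_mul]
    calc (1/2) * (c.c₀ * ((Fintype.card (Γ ⧸ N) : ℝ) * ∑ s : Gen S, D s))
        = (1/2) * ∑ e : (Γ ⧸ N) × Gen S, c.c₀ * D e.2 := by rw [h3]; ring
      _ ≤ _ := mul_le_mul_of_nonneg_left (Finset.sum_le_sum fun e _ => h2 e) (by norm_num)
  -- combine
  have hidx : (N.index : ℝ) = (Fintype.card (Γ ⧸ N) : ℝ) := by
    rw [Subgroup.index_eq_card, Nat.card_eq_fintype_card]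
  have hc0 : (0:ℝ) < c.c₀ := c.c₀_pos
  have hnn : 0 ≤ ((ballF S K).card : ℝ) / (c.c₀ * (Fintype.card (Γ ⧸ N) : ℝ)) := by
    positivity
  have final := mul_le_mul_of_nonneg_left stepC hnn
  have heq : ((ballF S K).card : ℝ) / (c.c₀ * (Fintype.card (Γ ⧸ N) : ℝ)) *
        ((1/2) * (c.c₀ * ((Fintype.card (Γ ⧸ N) : ℝ) * ∑ s : Gen S, D s)))
      = (1/2) * (((ballF S K).card : ℝ) * ∑ s : Gen S, D s) := by
    field_simp
  rw [hidx]
  calc IrestV N (ballF S K) (ELam S K) μ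
      ≤ (1/2) * ∑ e ∈ ELam S K, D e.2 := stepA
    _ ≤ (1/2) * (((ballF S K).card : ℝ) * ∑ s : Gen S, D s) :=
        mul_le_mul_of_nonneg_left stepB (by norm_num)
    _ = ((ballF S K).card : ℝ) / (c.c₀ * (Fintype.card (Γ ⧸ N) : ℝ)) *
        ((1/2) * (c.c₀ * ((Fintype.card (Γ ⧸ N) : ℝ) * ∑ s : Gen S, D s))) := heq.symm
    _ ≤ _ := final

end Tower
end

section
/- (Marginal Dirichlet form inequality) Let W be a finite set, μ a probability measure on {0,1}^W with density φ with respect to the uniform measure ν, and W' ⊆ W. Let μ' be the marginal of μ on {0,1}^{W'}, with density φ' with respect to the uniform measure ν' on {0,1}^{W'}. Then for every pair of vertices x,y ∈ W', ∫_{{0,1}^{W'}} (π_{x,y}√φ')² dν' ≤ ∫_{{0,1}^W} (π_{x,y}√φ)² dν. -/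
open Filter Pointwise

namespace Tower

variable {Γ : Type} [Group Γ] [DecidableEq Γ]

lemma exch_involutive {α : Type} [DecidableEq α] (x y : α) :
    Function.Involutive (exch x y) := by
  intro η; funext z
  simp only [exch]
  split_ifs with h1 h2 <;> simp_all [exch]

/-- Square root is subadditive relative to sums: `(√(Σf) − √(Σg))² ≤ Σ(√f − √g)²`. -/
lemma sqrt_sum_sub_sq_le_s9 {ι : Type*} (s : Finset ι) (f g : ι → ℝ)
    (hf : ∀ i ∈ s, 0 ≤ f i) (hg : ∀ i ∈ s, 0 ≤ g i) :
    (Real.sqrt (∑ i ∈ s, f i) - Real.sqrt (∑ i ∈ s, g i)) ^ 2 ≤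
      ∑ i ∈ s, (Real.sqrt (f i) - Real.sqrt (g i)) ^ 2 := by
  have hF : 0 ≤ ∑ i ∈ s, f i := Finset.sum_nonneg hf
  have hG : 0 ≤ ∑ i ∈ s, g i := Finset.sum_nonneg hg
  have key : ∑ i ∈ s, Real.sqrt (f i) * Real.sqrt (g i) ≤
      Real.sqrt (∑ i ∈ s, f i) * Real.sqrt (∑ i ∈ s, g i) := by
    rw [← Real.sqrt_mul hF]
    rw [Real.le_sqrt (Finset.sum_nonneg fun i _ =>
      mul_nonneg (Real.sqrt_nonneg _) (Real.sqrt_nonneg _))]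
    calc (∑ i ∈ s, Real.sqrt (f i) * Real.sqrt (g i)) ^ 2
        ≤ (∑ i ∈ s, Real.sqrt (f i) ^ 2) * ∑ i ∈ s, Real.sqrt (g i) ^ 2 :=
          Finset.sum_mul_sq_le_sq_mul_sq s _ _
      _ = (∑ i ∈ s, f i) * ∑ i ∈ s, g i := by
          rw [Finset.sum_congr rfl fun i hi => Real.sq_sqrt (hf i hi),
            Finset.sum_congr rfl fun i hi => Real.sq_sqrt (hg i hi)]
    exact mul_nonneg hF hG
  have expand : ∑ i ∈ s, (Real.sqrt (f i) - Real.sqrt (g i)) ^ 2 =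
      (∑ i ∈ s, f i) + (∑ i ∈ s, g i) -
        2 * ∑ i ∈ s, Real.sqrt (f i) * Real.sqrt (g i) := by
    rw [Finset.mul_sum, ← Finset.sum_add_distrib, ← Finset.sum_sub_distrib]
    refine Finset.sum_congr rfl fun i hi => ?_
    rw [sub_sq, Real.sq_sqrt (hf i hi), Real.sq_sqrt (hg i hi)]; ring
  rw [expand, sub_sq, Real.sq_sqrt hF, Real.sq_sqrt hG]
  nlinarith [key]

/-- **Marginal Dirichlet form inequality.** Restriction to a marginal does not increase each
single-exchange Dirichlet summand: for `x, y ∈ W' ⊆ W`,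
`∫ (π_{x,y} √φ')² dν' ≤ ∫ (π_{x,y} √φ)² dν`. -/
theorem marginal_dirichlet_inequality {W : Type} [Fintype W] [DecidableEq W]
    (μ : (W → Bool) → ℝ) (hpos : ∀ η, 0 ≤ μ η) (hsum : ∑ η, μ η = 1)
    (W' : Finset W) (x y : W) (hx : x ∈ W') (hy : y ∈ W') :
    ∑ ζ : ({w // w ∈ W'} → Bool),
        (Fintype.card ({w // w ∈ W'} → Bool) : ℝ)⁻¹ *
          (Real.sqrt ((Fintype.card ({w // w ∈ W'} → Bool) : ℝ) *
              (∑ η : W → Bool,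
                if (∀ w : {w // w ∈ W'}, η (w : W) = exchOn W' x y ζ w) then μ η else 0)) -
            Real.sqrt ((Fintype.card ({w // w ∈ W'} → Bool) : ℝ) *
              (∑ η : W → Bool,
                if (∀ w : {w // w ∈ W'}, η (w : W) = ζ w) then μ η else 0))) ^ 2 ≤
      ∑ η : W → Bool,
        (Fintype.card (W → Bool) : ℝ)⁻¹ *
          (Real.sqrt ((Fintype.card (W → Bool) : ℝ) * μ (exch x y η)) -
            Real.sqrt ((Fintype.card (W → Bool) : ℝ) * μ η)) ^ 2 := by
  classical
  set r : (W → Bool) → ({w // w ∈ W'} → Bool) := fun η w => η (w : W) with hr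
  -- interaction of exch and exchOn with the restriction map
  have hcomm : ∀ η : W → Bool, r (exch x y η) = exchOn W' x y (r η) := by
    intro η
    funext w
    simp only [hr, exch, exchOn, dif_pos hx, dif_pos hy]
  have hexch_inv : Function.Involutive (exch x y : (W → Bool) → (W → Bool)) :=
    exch_involutive x y
  have hOnEq : (exchOn W' x y : ({w // w ∈ W'} → Bool) → ({w // w ∈ W'} → Bool)) =
      exch (⟨x, hx⟩ : {w // w ∈ W'}) ⟨y, hy⟩ := by
    funext ζ w
    simp only [exchOn, exch, dif_pos hx, dif_pos hy, Subtype.ext_iff]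
  have hOn_inv : Function.Involutive (exchOn W' x y :
      ({w // w ∈ W'} → Bool) → ({w // w ∈ W'} → Bool)) := by
    rw [hOnEq]; exact exch_involutive _ _
  -- positive cardinalities
  set c : ℝ := (Fintype.card (W → Bool) : ℝ) with hcdef
  set c' : ℝ := (Fintype.card ({w // w ∈ W'} → Bool) : ℝ) with hc'def
  have hc : (0:ℝ) < c := by positivity
  have hc' : (0:ℝ) < c' := by positivity
  -- scalar simplification lemma
  have scal : ∀ (d : ℝ), 0 < d → ∀ a b : ℝ,
      d⁻¹ * (Real.sqrt (d * a) - Real.sqrt (d * b)) ^ 2 =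
        (Real.sqrt a - Real.sqrt b) ^ 2 := by
    intro d hd a b
    rw [Real.sqrt_mul hd.le, Real.sqrt_mul hd.le, ← mul_sub, mul_pow,
      Real.sq_sqrt hd.le, inv_mul_cancel_left₀ hd.ne']
  -- the marginal as a fiber sum
  have margEq : ∀ ζ : {w // w ∈ W'} → Bool,
      (∑ η : W → Bool, if (∀ w : {w // w ∈ W'}, η (w : W) = ζ w) then μ η else 0) =
        ∑ η ∈ Finset.univ.filter (fun η => r η = ζ), μ η := by
    intro ζ
    rw [Finset.sum_filter]
    refine Finset.sum_congr rfl fun η _ => ?_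
    refine if_congr ?_ rfl rfl
    constructor
    · intro h; funext w; exact h w
    · intro h w; exact congrFun h w
  -- the marginal at the exchanged configuration
  have margExchEq : ∀ ζ : {w // w ∈ W'} → Bool,
      (∑ η ∈ Finset.univ.filter (fun η => r η = exchOn W' x y ζ), μ η) =
        ∑ η ∈ Finset.univ.filter (fun η => r η = ζ), μ (exch x y η) := by
    intro ζ
    rw [Finset.sum_filter, Finset.sum_filter]
    refine (Fintype.sum_bijective (exch x y) hexch_inv.bijective _ _ fun η => ?_)
    rw [hcomm, hexch_inv η]
    exact if_congr hOn_inv.eq_iff.symm rfl rfl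
  -- simplify both sides
  have lhsEq : ∀ ζ : {w // w ∈ W'} → Bool,
      c'⁻¹ * (Real.sqrt (c' *
          (∑ η : W → Bool,
            if (∀ w : {w // w ∈ W'}, η (w : W) = exchOn W' x y ζ w) then μ η else 0)) -
        Real.sqrt (c' *
          (∑ η : W → Bool,
            if (∀ w : {w // w ∈ W'}, η (w : W) = ζ w) then μ η else 0))) ^ 2 =
      (Real.sqrt (∑ η ∈ Finset.univ.filter (fun η => r η = ζ), μ (exch x y η)) -
        Real.sqrt (∑ η ∈ Finset.univ.filter (fun η => r η = ζ), μ η)) ^ 2 := by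
    intro ζ
    rw [scal c' hc', margEq, margEq, margExchEq]
  calc ∑ ζ : {w // w ∈ W'} → Bool,
        c'⁻¹ * (Real.sqrt (c' *
            (∑ η : W → Bool,
              if (∀ w : {w // w ∈ W'}, η (w : W) = exchOn W' x y ζ w) then μ η else 0)) -
          Real.sqrt (c' *
            (∑ η : W → Bool,
              if (∀ w : {w // w ∈ W'}, η (w : W) = ζ w) then μ η else 0))) ^ 2
      = ∑ ζ : {w // w ∈ W'} → Bool,
          (Real.sqrt (∑ η ∈ Finset.univ.filter (fun η => r η = ζ), μ (exch x y η)) -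
            Real.sqrt (∑ η ∈ Finset.univ.filter (fun η => r η = ζ), μ η)) ^ 2 :=
        Finset.sum_congr rfl fun ζ _ => lhsEq ζ
    _ ≤ ∑ ζ : {w // w ∈ W'} → Bool, ∑ η ∈ Finset.univ.filter (fun η => r η = ζ),
          (Real.sqrt (μ (exch x y η)) - Real.sqrt (μ η)) ^ 2 := by
        refine Finset.sum_le_sum fun ζ _ => ?_
        exact sqrt_sum_sub_sq_le_s9 _ _ _ (fun η _ => hpos _) (fun η _ => hpos _)
    _ = ∑ η : W → Bool, (Real.sqrt (μ (exch x y η)) - Real.sqrt (μ η)) ^ 2 :=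
        Finset.sum_fiberwise _ _ _
    _ = ∑ η : W → Bool,
          c⁻¹ * (Real.sqrt (c * μ (exch x y η)) - Real.sqrt (c * μ η)) ^ 2 :=
        Finset.sum_congr rfl fun η _ => (scal c hc _ _).symm

end Tower
end

section
/- (Uniform replacement of the density argument) Let f: V×Z → ℝ be a Γ-invariant local function bundle and (F_i) a sequence of nonempty finite subsets of Γ with |F_i| → ∞. Then lim_{i→∞} sup_{ρ ∈ [0,1]} E_{ν_ρ} | ⟨f_o⟩( η̄_{o,i} ) − ⟨f_o⟩(ρ) | = 0, where η̄_{o,i} := (1/|F_i|) Σ_{σ∈F_i} η_{σo} and ⟨f_o⟩(ρ) := E_{ν_ρ}[f_o] (a polynomial function of ρ ∈ [0,1]). -/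
open Filter Pointwise

namespace Tower

variable {Γ : Type} [Group Γ] [DecidableEq Γ]

/-! ### Auxiliary lemmas for the uniform density replacement -/

/-- Centered indicator. -/
def zc (ρ : ℝ) (b : Bool) : ℝ := (if b then 1 else 0) - ρ

lemma bw_nonneg {ρ : ℝ} (h0 : 0 ≤ ρ) (h1 : ρ ≤ 1) (b : Bool) : 0 ≤ bw ρ b := by
  cases b <;> simp [bw] <;> linarith

lemma bw_le_one {ρ : ℝ} (h0 : 0 ≤ ρ) (h1 : ρ ≤ 1) (b : Bool) : bw ρ b ≤ 1 := by
  cases b <;> simp [bw] <;> linarith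

lemma abs_bw_sub_bw (x y : ℝ) (b : Bool) : |bw x b - bw y b| = |x - y| := by
  cases b
  · simp only [bw, if_neg Bool.false_ne_true]
    rw [show (1 - x - (1 - y)) = -(x - y) by ring, abs_neg]
  · simp [bw]

lemma sum_prod_bw {ι : Type} [Fintype ι] [DecidableEq ι] (ρ : ℝ) (h : ι → Bool → ℝ) :
    ∑ ζ : ι → Bool, ∏ a, (bw ρ (ζ a) * h a (ζ a)) =
      ∏ a, (ρ * h a true + (1 - ρ) * h a false) := by
  have := Finset.prod_univ_sum (fun _ : ι => (Finset.univ : Finset Bool))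
    (fun a b => bw ρ b * h a b)
  rw [Fintype.piFinset_univ] at this
  rw [← this]
  refine Finset.prod_congr rfl fun a _ => ?_
  rw [Fintype.sum_bool]
  simp [bw]

lemma sum_prod_bw_one {ι : Type} [Fintype ι] [DecidableEq ι] (ρ : ℝ) :
    ∑ ζ : ι → Bool, ∏ a, bw ρ (ζ a) = 1 := by
  have := sum_prod_bw (ι := ι) ρ (fun _ _ => 1)
  simpa using this

lemma cross_zero {ι : Type} [Fintype ι] [DecidableEq ι] (ρ : ℝ) {a b : ι} (hab : a ≠ b) :
    ∑ ζ : ι → Bool, (∏ c, bw ρ (ζ c)) * (zc ρ (ζ a) * zc ρ (ζ b)) = 0 := by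
  set h : ι → Bool → ℝ := fun c x => if c = a then zc ρ x else if c = b then zc ρ x else 1 with hh
  have claim : ∀ ζ : ι → Bool, ∏ c, h c (ζ c) = zc ρ (ζ a) * zc ρ (ζ b) := by
    intro ζ
    have hbmem : b ∈ Finset.univ.erase a := Finset.mem_erase.2 ⟨hab.symm, Finset.mem_univ b⟩
    rw [← Finset.mul_prod_erase Finset.univ (fun c => h c (ζ c)) (Finset.mem_univ a),
      ← Finset.mul_prod_erase _ (fun c => h c (ζ c)) hbmem]
    have hrest : ∏ c ∈ (Finset.univ.erase a).erase b, h c (ζ c) = 1 := by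
      refine Finset.prod_eq_one fun c hc => ?_
      have hc1 : c ≠ b := (Finset.mem_erase.1 hc).1
      have hc2 : c ≠ a := (Finset.mem_erase.1 (Finset.mem_erase.1 hc).2).1
      simp [hh, hc1, hc2]
    rw [hrest]
    simp [hh, hab, hab.symm]
  calc ∑ ζ : ι → Bool, (∏ c, bw ρ (ζ c)) * (zc ρ (ζ a) * zc ρ (ζ b))
      = ∑ ζ : ι → Bool, ∏ c, (bw ρ (ζ c) * h c (ζ c)) := by
        refine Finset.sum_congr rfl fun ζ _ => ?_
        rw [Finset.prod_mul_distrib, claim ζ]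
    _ = ∏ c, (ρ * h c true + (1 - ρ) * h c false) := sum_prod_bw ρ h
    _ = 0 := by
        refine Finset.prod_eq_zero (Finset.mem_univ a) ?_
        simp [hh, zc]
        ring

lemma diag_var {ι : Type} [Fintype ι] [DecidableEq ι] (ρ : ℝ) (a : ι) :
    ∑ ζ : ι → Bool, (∏ c, bw ρ (ζ c)) * (zc ρ (ζ a) * zc ρ (ζ a)) = ρ * (1 - ρ) := by
  set h : ι → Bool → ℝ := fun c x => if c = a then zc ρ x * zc ρ x else 1 with hh
  have claim : ∀ ζ : ι → Bool, ∏ c, h c (ζ c) = zc ρ (ζ a) * zc ρ (ζ a) := by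
    intro ζ
    rw [show (∏ c, h c (ζ c)) = ∏ c, (if c = a then zc ρ (ζ c) * zc ρ (ζ c) else 1) from rfl,
      Finset.prod_ite_eq' Finset.univ a (fun c => zc ρ (ζ c) * zc ρ (ζ c))]
    simp
  calc ∑ ζ : ι → Bool, (∏ c, bw ρ (ζ c)) * (zc ρ (ζ a) * zc ρ (ζ a))
      = ∑ ζ : ι → Bool, ∏ c, (bw ρ (ζ c) * h c (ζ c)) := by
        refine Finset.sum_congr rfl fun ζ _ => ?_
        rw [Finset.prod_mul_distrib, claim ζ]
    _ = ∏ c, (ρ * h c true + (1 - ρ) * h c false) := sum_prod_bw ρ h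
    _ = ρ * (1 - ρ) := by
        rw [Finset.prod_eq_single a (fun c _ hc => by simp [hh, hc])
          (fun h => absurd (Finset.mem_univ a) h)]
        simp [hh, zc]
        ring

lemma second_moment {ι : Type} [Fintype ι] [DecidableEq ι] (ρ : ℝ) :
    ∑ ζ : ι → Bool, (∏ c, bw ρ (ζ c)) * (∑ a, zc ρ (ζ a)) ^ 2 =
      (Fintype.card ι : ℝ) * (ρ * (1 - ρ)) := by
  have expand : ∀ ζ : ι → Bool, (∑ a, zc ρ (ζ a)) ^ 2 =
      ∑ a, ∑ b, zc ρ (ζ a) * zc ρ (ζ b) := by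
    intro ζ; rw [sq, Finset.sum_mul_sum]
  simp_rw [expand, Finset.mul_sum]
  rw [Finset.sum_comm]
  have key1 : ∀ a : ι, ∑ ζ : ι → Bool, ∑ b, (∏ c, bw ρ (ζ c)) * (zc ρ (ζ a) * zc ρ (ζ b))
      = ρ * (1 - ρ) := by
    intro a
    rw [Finset.sum_comm]
    have key : ∀ b : ι, ∑ ζ : ι → Bool, (∏ c, bw ρ (ζ c)) * (zc ρ (ζ a) * zc ρ (ζ b))
        = if a = b then ρ * (1 - ρ) else 0 := by
      intro b
      by_cases hab : a = b
      · subst hab; simp [diag_var ρ a]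
      · simp [hab, cross_zero ρ hab]
    simp_rw [key]
    rw [Finset.sum_ite_eq]
    simp
  simp_rw [key1]
  rw [Finset.sum_const, Finset.card_univ, nsmul_eq_mul]

lemma abs_prod_sub_prod_le {ι : Type} [DecidableEq ι] (s : Finset ι) (u v : ι → ℝ)
    (hu : ∀ i ∈ s, 0 ≤ u i ∧ u i ≤ 1) (hv : ∀ i ∈ s, 0 ≤ v i ∧ v i ≤ 1) :
    |∏ i ∈ s, u i - ∏ i ∈ s, v i| ≤ ∑ i ∈ s, |u i - v i| := by
  induction s using Finset.induction with
  | empty => simp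
  | @insert a s ha ih =>
    rw [Finset.prod_insert ha, Finset.prod_insert ha, Finset.sum_insert ha]
    have hu' := fun i hi => hu i (Finset.mem_insert_of_mem hi)
    have hv' := fun i hi => hv i (Finset.mem_insert_of_mem hi)
    have ihs := ih hu' hv'
    have hua := hu a (Finset.mem_insert_self a s)
    have hPv0 : 0 ≤ ∏ i ∈ s, v i := Finset.prod_nonneg fun i hi => (hv' i hi).1
    have hPv1 : ∏ i ∈ s, v i ≤ 1 :=
      Finset.prod_le_one (fun i hi => (hv' i hi).1) fun i hi => (hv' i hi).2
    have key : u a * ∏ i ∈ s, u i - v a * ∏ i ∈ s, v i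
        = u a * (∏ i ∈ s, u i - ∏ i ∈ s, v i) + (u a - v a) * ∏ i ∈ s, v i := by ring
    rw [key]
    refine (abs_add_le _ _).trans ?_
    rw [abs_mul, abs_mul]
    have h1 : |u a| * |∏ i ∈ s, u i - ∏ i ∈ s, v i| ≤ ∑ i ∈ s, |u i - v i| := by
      calc |u a| * |∏ i ∈ s, u i - ∏ i ∈ s, v i| ≤ 1 * |∏ i ∈ s, u i - ∏ i ∈ s, v i| := by
            apply mul_le_mul_of_nonneg_right _ (abs_nonneg _)
            rw [abs_of_nonneg hua.1]; exact hua.2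
        _ = _ := one_mul _
        _ ≤ _ := ihs
    have h2 : |u a - v a| * |∏ i ∈ s, v i| ≤ |u a - v a| := by
      calc |u a - v a| * |∏ i ∈ s, v i| ≤ |u a - v a| * 1 := by
            apply mul_le_mul_of_nonneg_left _ (abs_nonneg _)
            rw [abs_of_nonneg hPv0]; exact hPv1
        _ = _ := mul_one _
    linarith

/-- Lipschitz estimate for a cylinder expectation as a function of the density. -/
lemma expCyl_lipschitz {Γ : Type} [DecidableEq Γ] (A : Finset Γ) (g : (Γ → Bool) → ℝ)
    {x y : ℝ} (hx0 : 0 ≤ x) (hx1 : x ≤ 1) (hy0 : 0 ≤ y) (hy1 : y ≤ 1) :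
    |expCyl x A g - expCyl y A g| ≤
      ((A.card : ℝ) * ∑ ζ : ({a // a ∈ A} → Bool),
        |g (fun z => if h : z ∈ A then ζ ⟨z, h⟩ else false)|) * |x - y| := by
  unfold expCyl
  rw [← Finset.sum_sub_distrib]
  refine (Finset.abs_sum_le_sum_abs _ _).trans ?_
  have step : ∀ ζ : ({a // a ∈ A} → Bool),
      |(∏ a, bw x (ζ a)) * g (fun z => if h : z ∈ A then ζ ⟨z, h⟩ else false) -
        (∏ a, bw y (ζ a)) * g (fun z => if h : z ∈ A then ζ ⟨z, h⟩ else false)| ≤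
      ((A.card : ℝ) * |x - y|) * |g (fun z => if h : z ∈ A then ζ ⟨z, h⟩ else false)| := by
    intro ζ
    rw [← sub_mul, abs_mul]
    refine mul_le_mul_of_nonneg_right ?_ (abs_nonneg _)
    calc |(∏ a, bw x (ζ a)) - (∏ a, bw y (ζ a))|
        ≤ ∑ a : {a // a ∈ A}, |bw x (ζ a) - bw y (ζ a)| :=
          abs_prod_sub_prod_le _ _ _ (fun i _ => ⟨bw_nonneg hx0 hx1 _, bw_le_one hx0 hx1 _⟩)
            (fun i _ => ⟨bw_nonneg hy0 hy1 _, bw_le_one hy0 hy1 _⟩)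
      _ = ∑ _a : {a // a ∈ A}, |x - y| := by simp_rw [abs_bw_sub_bw]
      _ = (A.card : ℝ) * |x - y| := by
          rw [Finset.sum_const, Finset.card_univ, Fintype.card_coe, nsmul_eq_mul]
  refine (Finset.sum_le_sum fun ζ _ => step ζ).trans (le_of_eq ?_)
  rw [Finset.mul_sum, Finset.sum_mul]
  refine Finset.sum_congr rfl fun ζ _ => by ring

lemma abs_le_half_sqrt_aux {t d : ℝ} (ht : 0 < t) : |d| ≤ (t * d ^ 2 + t⁻¹) / 2 := by
  have h2 : t * |d| ≤ (t ^ 2 * d ^ 2 + 1) / 2 := by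
    nlinarith [sq_nonneg (t * |d| - 1), sq_abs d]
  have h3 := mul_le_mul_of_nonneg_left h2 (inv_pos.2 ht).le
  rw [← mul_assoc, inv_mul_cancel₀ ht.ne', one_mul] at h3
  calc |d| ≤ t⁻¹ * ((t ^ 2 * d ^ 2 + 1) / 2) := h3
    _ = (t * d ^ 2 + t⁻¹) / 2 := by field_simp

/-- **Uniform replacement of the density argument.** If `|F_i| → ∞`, then
`lim_{i→∞} sup_{ρ ∈ [0,1]} E_{ν_ρ} |⟨f_o⟩(η̄_{o,i}) - ⟨f_o⟩(ρ)| = 0`. -/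
theorem uniform_density_replacement {Γ : Type} [Group Γ] [DecidableEq Γ] [Infinite Γ]
    (S : Finset Γ) (hS_symm : ∀ s ∈ S, s⁻¹ ∈ S)
    (hS_gen : Subgroup.closure (S : Set Γ) = ⊤)
    (f : LocalBundleV S) (F : ℕ → Finset Γ) (hne : ∀ i, (F i).Nonempty)
    (hcard : Tendsto (fun i => (F i).card) atTop atTop) :
    Tendsto (fun i : ℕ =>
        sSup ((fun ρ : ℝ =>
            expCyl ρ (F i)
              (fun η =>
                |globalAvg f (((F i).card : ℝ)⁻¹ *
                    ∑ σ ∈ F i, (if η σ then (1 : ℝ) else 0)) -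
                  globalAvg f ρ|)) ''
          Set.Icc (0 : ℝ) 1))
      atTop (nhds 0) := by
  classical
  set B := ballF S f.r with hB
  set Cc : ℝ := (B.card : ℝ) * ∑ ζ : ({a // a ∈ B} → Bool),
      |f.f 1 (fun z => if h : z ∈ B then ζ ⟨z, h⟩ else false)| with hCc
  have hC0 : 0 ≤ Cc := by
    apply mul_nonneg (Nat.cast_nonneg _)
    exact Finset.sum_nonneg fun ζ _ => abs_nonneg _
  have hLip : ∀ x y : ℝ, 0 ≤ x → x ≤ 1 → 0 ≤ y → y ≤ 1 →
      |globalAvg f x - globalAvg f y| ≤ Cc * |x - y| := fun x y hx0 hx1 hy0 hy1 =>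
    expCyl_lipschitz B (f.f 1) hx0 hx1 hy0 hy1
  have key : ∀ i : ℕ, ∀ ρ ∈ Set.Icc (0:ℝ) 1,
      expCyl ρ (F i) (fun η => |globalAvg f (((F i).card : ℝ)⁻¹ *
          ∑ σ ∈ F i, (if η σ then (1 : ℝ) else 0)) - globalAvg f ρ|) ≤
        Cc / Real.sqrt (((F i).card : ℝ)) := by
    intro i ρ hρ
    obtain ⟨hρ0, hρ1⟩ := hρ
    set A := F i with hA
    have hn : 0 < A.card := (hne i).card_pos
    have hn' : (0 : ℝ) < (A.card : ℝ) := by exact_mod_cast hn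
    set t := Real.sqrt ((A.card : ℝ)) with hts
    have ht : 0 < t := Real.sqrt_pos.2 hn'
    have htt : t * t = (A.card : ℝ) := Real.mul_self_sqrt hn'.le
    set n : ℝ := (A.card : ℝ) with hnn
    have hsum : ∀ ζ : ({a // a ∈ A} → Bool),
        (∑ σ ∈ A, (if (if h : σ ∈ A then ζ ⟨σ, h⟩ else false) then (1:ℝ) else 0)) =
          ∑ a : {a // a ∈ A}, (if ζ a then (1:ℝ) else 0) := by
      intro ζ
      rw [← Finset.sum_attach A (fun σ => if (if h : σ ∈ A then ζ ⟨σ, h⟩ else false)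
        then (1:ℝ) else 0), Finset.univ_eq_attach]
      exact Finset.sum_congr rfl fun a _ => by rw [dif_pos a.2]
    have hzc : ∀ ζ : ({a // a ∈ A} → Bool),
        ∑ a : {a // a ∈ A}, zc ρ (ζ a) =
          (∑ a : {a // a ∈ A}, (if ζ a then (1:ℝ) else 0)) - n * ρ := by
      intro ζ
      unfold zc
      rw [Finset.sum_sub_distrib, Finset.sum_const, Finset.card_univ, Fintype.card_coe,
        nsmul_eq_mul]
    have hdev : ∀ ζ : ({a // a ∈ A} → Bool),
        n⁻¹ * (∑ a : {a // a ∈ A}, (if ζ a then (1:ℝ) else 0)) - ρ =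
          n⁻¹ * ∑ a : {a // a ∈ A}, zc ρ (ζ a) := by
      intro ζ
      rw [hzc ζ, mul_sub, ← mul_assoc, inv_mul_cancel₀ hn'.ne', one_mul]
    have hx01 : ∀ ζ : ({a // a ∈ A} → Bool),
        0 ≤ n⁻¹ * (∑ a : {a // a ∈ A}, (if ζ a then (1:ℝ) else 0)) ∧
          n⁻¹ * (∑ a : {a // a ∈ A}, (if ζ a then (1:ℝ) else 0)) ≤ 1 := by
      intro ζ
      have h0 : (0:ℝ) ≤ ∑ a : {a // a ∈ A}, (if ζ a then (1:ℝ) else 0) :=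
        Finset.sum_nonneg fun a _ => by positivity
      have h1 : (∑ a : {a // a ∈ A}, (if ζ a then (1:ℝ) else 0)) ≤ n := by
        calc (∑ a : {a // a ∈ A}, (if ζ a then (1:ℝ) else 0))
            ≤ ∑ _a : {a // a ∈ A}, (1:ℝ) :=
              Finset.sum_le_sum fun a _ => by split <;> norm_num
          _ = n := by
              rw [Finset.sum_const, Finset.card_univ, Fintype.card_coe, nsmul_eq_mul, mul_one]
      constructor
      · exact mul_nonneg (inv_nonneg.2 hn'.le) h0
      · calc n⁻¹ * (∑ a : {a // a ∈ A}, (if ζ a then (1:ℝ) else 0)) ≤ n⁻¹ * n :=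
            mul_le_mul_of_nonneg_left h1 (inv_nonneg.2 hn'.le)
          _ = 1 := inv_mul_cancel₀ hn'.ne'
    have point : ∀ ζ : ({a // a ∈ A} → Bool),
        |globalAvg f (n⁻¹ *
            ∑ σ ∈ A, (if (if h : σ ∈ A then ζ ⟨σ, h⟩ else false) then (1:ℝ) else 0)) -
          globalAvg f ρ| ≤
        Cc * ((t * (n⁻¹ * ∑ a : {a // a ∈ A}, zc ρ (ζ a)) ^ 2 + t⁻¹) / 2) := by
      intro ζ
      rw [hsum ζ]
      calc |globalAvg f (n⁻¹ * ∑ a : {a // a ∈ A}, (if ζ a then (1:ℝ) else 0)) -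
            globalAvg f ρ| ≤
          Cc * |n⁻¹ * (∑ a : {a // a ∈ A}, (if ζ a then (1:ℝ) else 0)) - ρ| :=
            hLip _ _ (hx01 ζ).1 (hx01 ζ).2 hρ0 hρ1
        _ = Cc * |n⁻¹ * ∑ a : {a // a ∈ A}, zc ρ (ζ a)| := by rw [hdev ζ]
        _ ≤ Cc * ((t * (n⁻¹ * ∑ a : {a // a ∈ A}, zc ρ (ζ a)) ^ 2 + t⁻¹) / 2) :=
            mul_le_mul_of_nonneg_left (abs_le_half_sqrt_aux ht) hC0
    have hq1 : ρ * (1 - ρ) ≤ 1 := by nlinarith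
    have hq0 : 0 ≤ ρ * (1 - ρ) := mul_nonneg hρ0 (by linarith)
    have hkey : t * (n⁻¹) ^ 2 * n = t⁻¹ := by
      have h5 : (n⁻¹) ^ 2 * n = n⁻¹ := by
        rw [sq, mul_assoc, inv_mul_cancel₀ hn'.ne', mul_one]
      have h4 : t * (n⁻¹) ^ 2 * n = t * n⁻¹ := by
        calc t * (n⁻¹) ^ 2 * n = t * ((n⁻¹) ^ 2 * n) := by ring
          _ = t * n⁻¹ := by rw [h5]
      rw [h4, ← htt, mul_inv, ← mul_assoc, mul_inv_cancel₀ ht.ne', one_mul]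
    calc expCyl ρ A (fun η => |globalAvg f (n⁻¹ * ∑ σ ∈ A, (if η σ then (1:ℝ) else 0)) -
            globalAvg f ρ|)
        = ∑ ζ : ({a // a ∈ A} → Bool), (∏ a : {a // a ∈ A}, bw ρ (ζ a)) *
            |globalAvg f (n⁻¹ *
              ∑ σ ∈ A, (if (if h : σ ∈ A then ζ ⟨σ, h⟩ else false) then (1:ℝ) else 0)) -
              globalAvg f ρ| := by unfold expCyl; rfl
      _ ≤ ∑ ζ : ({a // a ∈ A} → Bool), (∏ a : {a // a ∈ A}, bw ρ (ζ a)) *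
            (Cc * ((t * (n⁻¹ * ∑ a : {a // a ∈ A}, zc ρ (ζ a)) ^ 2 + t⁻¹) / 2)) := by
          refine Finset.sum_le_sum fun ζ _ => ?_
          exact mul_le_mul_of_nonneg_left (point ζ)
            (Finset.prod_nonneg fun a _ => bw_nonneg hρ0 hρ1 _)
      _ = (Cc * t * (n⁻¹) ^ 2 / 2) *
            (∑ ζ : ({a // a ∈ A} → Bool), (∏ a : {a // a ∈ A}, bw ρ (ζ a)) *
              (∑ a : {a // a ∈ A}, zc ρ (ζ a)) ^ 2) +
          (Cc * t⁻¹ / 2) *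
            (∑ ζ : ({a // a ∈ A} → Bool), ∏ a : {a // a ∈ A}, bw ρ (ζ a)) := by
          rw [Finset.mul_sum, Finset.mul_sum, ← Finset.sum_add_distrib]
          refine Finset.sum_congr rfl fun ζ _ => by ring
      _ = (Cc * t * (n⁻¹) ^ 2 / 2) * (n * (ρ * (1 - ρ))) + (Cc * t⁻¹ / 2) * 1 := by
          rw [second_moment ρ, sum_prod_bw_one ρ, Fintype.card_coe]
      _ = (Cc * (ρ * (1 - ρ)) / 2) * (t * (n⁻¹) ^ 2 * n) + Cc * t⁻¹ / 2 := by ring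
      _ = (Cc * (ρ * (1 - ρ)) / 2) * t⁻¹ + Cc * t⁻¹ / 2 := by rw [hkey]
      _ ≤ (Cc * 1 / 2) * t⁻¹ + Cc * t⁻¹ / 2 := by
          have hti : (0:ℝ) ≤ t⁻¹ := (inv_pos.2 ht).le
          nlinarith [mul_nonneg (mul_nonneg hC0 hti) (sub_nonneg.2 hq1)]
      _ = Cc / t := by rw [div_eq_mul_inv Cc t]; ring
  have hBdd : ∀ i : ℕ, BddAbove ((fun ρ : ℝ =>
      expCyl ρ (F i) (fun η => |globalAvg f (((F i).card : ℝ)⁻¹ *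
        ∑ σ ∈ F i, (if η σ then (1 : ℝ) else 0)) - globalAvg f ρ|)) ''
        Set.Icc (0 : ℝ) 1) := by
    intro i
    refine ⟨Cc / Real.sqrt (((F i).card : ℝ)), ?_⟩
    rintro x ⟨ρ, hρ, rfl⟩
    exact key i ρ hρ
  have hup : ∀ i : ℕ, sSup ((fun ρ : ℝ =>
      expCyl ρ (F i) (fun η => |globalAvg f (((F i).card : ℝ)⁻¹ *
        ∑ σ ∈ F i, (if η σ then (1 : ℝ) else 0)) - globalAvg f ρ|)) ''
        Set.Icc (0 : ℝ) 1) ≤ Cc / Real.sqrt (((F i).card : ℝ)) := by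
    intro i
    refine Real.sSup_le ?_ (div_nonneg hC0 (Real.sqrt_nonneg _))
    rintro x ⟨ρ, hρ, rfl⟩
    exact key i ρ hρ
  have hlow : ∀ i : ℕ, 0 ≤ sSup ((fun ρ : ℝ =>
      expCyl ρ (F i) (fun η => |globalAvg f (((F i).card : ℝ)⁻¹ *
        ∑ σ ∈ F i, (if η σ then (1 : ℝ) else 0)) - globalAvg f ρ|)) ''
        Set.Icc (0 : ℝ) 1) := by
    intro i
    have hmem : expCyl (0:ℝ) (F i) (fun η => |globalAvg f (((F i).card : ℝ)⁻¹ *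
        ∑ σ ∈ F i, (if η σ then (1 : ℝ) else 0)) - globalAvg f (0:ℝ)|) ∈
        ((fun ρ : ℝ =>
          expCyl ρ (F i) (fun η => |globalAvg f (((F i).card : ℝ)⁻¹ *
            ∑ σ ∈ F i, (if η σ then (1 : ℝ) else 0)) - globalAvg f ρ|)) ''
          Set.Icc (0 : ℝ) 1) := ⟨0, ⟨le_refl 0, zero_le_one⟩, rfl⟩
    have h0 : 0 ≤ expCyl (0:ℝ) (F i) (fun η => |globalAvg f (((F i).card : ℝ)⁻¹ *
        ∑ σ ∈ F i, (if η σ then (1 : ℝ) else 0)) - globalAvg f (0:ℝ)|) := by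
      refine Finset.sum_nonneg fun ζ _ => mul_nonneg ?_ (abs_nonneg _)
      exact Finset.prod_nonneg fun a _ => bw_nonneg le_rfl zero_le_one _
    exact h0.trans (le_csSup (hBdd i) hmem)
  refine squeeze_zero hlow hup ?_
  have hs : Tendsto Real.sqrt atTop atTop := by
    refine tendsto_atTop_atTop.2 fun b => ⟨max 0 (b ^ 2), fun x hx => ?_⟩
    have h1 : b ^ 2 ≤ x := le_trans (le_max_right _ _) hx
    calc b ≤ |b| := le_abs_self b
      _ = Real.sqrt (b ^ 2) := (Real.sqrt_sq_eq_abs b).symm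
      _ ≤ Real.sqrt x := Real.sqrt_le_sqrt h1
  exact Tendsto.div_atTop tendsto_const_nhds
    (hs.comp (tendsto_natCast_atTop_atTop.comp hcard))


end Tower
end
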